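/- There is no (N-1)×(N-1) integer matrix A with |det A| = 1 such that PA is a strictly larger regular N-gon when N = 3, 4, or 6, where P is the 2×(N-1) matrix of nonzero vertices of a regular N-gon with one vertex at the origin. (Equivalently: for N ∈ {3,4,6}, all points of the additive group generated by the vertices of a regular N-gon lie in a lattice containing no regular N-gon smaller than the original.) -/

import Mathlib

open Real

noncomputable section

/-- The `j`-th vertex of a regular `N`-gon with circumradius `r`, phase `φ`, listed in
counterclockwise order and translated so that the `0`-th vertex is the origin. -/
def ngonVert (N : ℕ) (r φ : ℝ) (j : ℕ) : Fin 2 → ℝ :=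
  ![r * cos (2 * π * j / N + φ) - r * cos φ, r * sin (2 * π * j / N + φ) - r * sin φ]

/-- The `2 × (N-1)` matrix whose columns are the nonzero vertices `p₁, …, p_{N-1}` of a
regular `N`-gon with `p₀ = 0`. -/
def ngonMatrix (N : ℕ) (r φ : ℝ) : Matrix (Fin 2) (Fin (N - 1)) ℝ :=
  fun a i => ngonVert N r φ ((i : ℕ) + 1) a

/-- The `m`-th point (for `m : Fin N`) of the configuration obtained by applying the integer
matrix `A` on the right: the stationary piece stays at the origin, and piece `m ≥ 1` sits at
the `(m-1)`-st column of `P · A`. -/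
def newConfig (N : ℕ) (r φ : ℝ) (A : Matrix (Fin (N - 1)) (Fin (N - 1)) ℤ) (m : Fin N) :
    Fin 2 → ℝ :=
  if h : (m : ℕ) = 0 then 0
  else fun a =>
    (ngonMatrix N r φ * A.map ((↑) : ℤ → ℝ)) a ⟨(m : ℕ) - 1, by have := m.isLt; omega⟩


lemma cosv1 : cos (π * 2⁻¹) = 0 := by rw [show (π * 2⁻¹ : ℝ) = π/2 by ring, cos_pi_div_two]
lemma sinv1 : sin (π * 2⁻¹) = 1 := by rw [show (π * 2⁻¹ : ℝ) = π/2 by ring, sin_pi_div_two]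
lemma cosv2 : cos (π * (3/2)) = 0 := by
  rw [show (π * (3/2) : ℝ) = π + π/2 by ring, cos_add, cos_pi, sin_pi, cos_pi_div_two]; ring
lemma sinv2 : sin (π * (3/2)) = -1 := by
  rw [show (π * (3/2) : ℝ) = π + π/2 by ring, sin_add, cos_pi, sin_pi, sin_pi_div_two]; ring
lemma cosv3 : cos (π * 3⁻¹) = 1/2 := by
  rw [show (π * 3⁻¹ : ℝ) = π/3 by ring, cos_pi_div_three]
lemma sinv3 : sin (π * 3⁻¹) = √3/2 := by
  rw [show (π * 3⁻¹ : ℝ) = π/3 by ring, sin_pi_div_three]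
lemma cosv4 : cos (π * (2/3)) = -(1/2) := by
  rw [show (π * (2/3) : ℝ) = π - π/3 by ring, cos_pi_sub, cos_pi_div_three]
lemma sinv4 : sin (π * (2/3)) = √3/2 := by
  rw [show (π * (2/3) : ℝ) = π - π/3 by ring, sin_pi_sub, sin_pi_div_three]
lemma cosv5 : cos (π * (4/3)) = -(1/2) := by
  rw [show (π * (4/3) : ℝ) = π + π/3 by ring, cos_add, cos_pi, sin_pi, cos_pi_div_three]; ring
lemma sinv5 : sin (π * (4/3)) = -(√3/2) := by
  rw [show (π * (4/3) : ℝ) = π + π/3 by ring, sin_add, cos_pi, sin_pi, sin_pi_div_three]; ring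
lemma cosv6 : cos (π * (5/3)) = 1/2 := by
  rw [show (π * (5/3) : ℝ) = 2*π - π/3 by ring, cos_sub, cos_two_pi, sin_two_pi, cos_pi_div_three]
  ring
lemma sinv6 : sin (π * (5/3)) = -(√3/2) := by
  rw [show (π * (5/3) : ℝ) = 2*π - π/3 by ring, sin_sub, cos_two_pi, sin_two_pi, sin_pi_div_three]
  ring

lemma intMap_mul {α β γ : Type*} [Fintype β] (X : Matrix α β ℤ) (Y : Matrix β γ ℤ) :
    (X * Y).map ((↑) : ℤ → ℝ) = X.map ((↑) : ℤ → ℝ) * Y.map ((↑) : ℤ → ℝ) := by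
  funext p q
  simp [Matrix.map_apply, Matrix.mul_apply]

lemma intMap_det {n : Type*} [Fintype n] [DecidableEq n] (X : Matrix n n ℤ) :
    (X.map ((↑) : ℤ → ℝ)).det = (X.det : ℝ) := by
  rw [show ((↑) : ℤ → ℝ) = ⇑(Int.castRingHom ℝ) from rfl]
  exact (RingHom.map_det (Int.castRingHom ℝ) X).symm

def Bmat (N : ℕ) (r φ : ℝ) : Matrix (Fin 2) (Fin 2) ℝ :=
  fun a q => ngonVert N r φ ((q : ℕ) + 1) a

set_option maxHeartbeats 1000000 in
theorem aux (N : ℕ) (hN3 : 3 ≤ N) (r φ : ℝ)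
    (C : Matrix (Fin 2) (Fin (N - 1)) ℤ)
    (hPC : ngonMatrix N r φ = Bmat N r φ * C.map ((↑) : ℤ → ℝ))
    (hB : (Bmat N r φ).det ≠ 0) :
    ¬ ∃ A : Matrix (Fin (N - 1)) (Fin (N - 1)) ℤ,
        |A.det| = 1 ∧
        ∃ (lam : ℝ) (S : Matrix (Fin 2) (Fin 2) ℝ) (t : Fin 2 → ℝ) (σ : Equiv.Perm (Fin N)),
          1 < lam ∧ S.transpose * S = 1 ∧
          ∀ k : Fin N,
            newConfig N r φ A (σ k) = lam • S.mulVec (ngonVert N r φ k) + t := by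
  rintro ⟨A, hA, lam, S, t, σ, hlam, hS, hcfg⟩
  have hN0 : 0 < N := by omega
  set z0 : Fin N := ⟨0, hN0⟩ with hz0
  -- integer-vector representation of newConfig
  set W : Fin N → Fin (N - 1) → ℤ := fun m =>
    if h : (m : ℕ) = 0 then 0 else fun i => A i ⟨(m : ℕ) - 1, by have := m.isLt; omega⟩ with hWdef
  have hW : ∀ m : Fin N, newConfig N r φ A m =
      (ngonMatrix N r φ).mulVec (fun i => ((W m i : ℤ) : ℝ)) := by
    intro m
    by_cases h : (m : ℕ) = 0
    · funext a
      simp [newConfig, h, hWdef, Matrix.mulVec, dotProduct]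
    · funext a
      simp [newConfig, h, hWdef, Matrix.mulVec, dotProduct, Matrix.mul_apply,
        Matrix.map_apply]
  -- vertex 0 is origin
  have hv0 : ngonVert N r φ ((z0 : Fin N) : ℕ) = 0 := by
    funext a
    fin_cases a <;> simp [ngonVert, hz0]
  -- difference representation
  have hdiff : ∀ k : Fin N, lam • S.mulVec (ngonVert N r φ k) =
      (ngonMatrix N r φ).mulVec (fun i => ((W (σ k) i - W (σ z0) i : ℤ) : ℝ)) := by
    intro k
    have h0 := hcfg z0
    rw [hv0] at h0
    simp only [Matrix.mulVec_zero, smul_zero, zero_add] at h0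
    have hk := hcfg k
    rw [hW (σ k)] at hk
    rw [hW (σ z0)] at h0
    rw [← h0] at hk
    have heq : lam • S.mulVec (ngonVert N r φ k) =
        (ngonMatrix N r φ).mulVec (fun i => ((W (σ k) i : ℤ) : ℝ)) -
          (ngonMatrix N r φ).mulVec (fun i => ((W (σ z0) i : ℤ) : ℝ)) := by
      rw [hk]; abel
    have hvec : ((fun i => ((W (σ k) i : ℤ) : ℝ)) - fun i => ((W (σ z0) i : ℤ) : ℝ)) =
        fun i => ((W (σ k) i - W (σ z0) i : ℤ) : ℝ) := by
      funext i; simp [Pi.sub_apply]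
    rw [heq, ← Matrix.mulVec_sub, hvec]
  -- P applied to integer vector factors through B
  have hPB : ∀ z : Fin (N - 1) → ℤ,
      (ngonMatrix N r φ).mulVec (fun i => ((z i : ℤ) : ℝ)) =
        (Bmat N r φ).mulVec (fun p => ((C.mulVec z p : ℤ) : ℝ)) := by
    intro z
    rw [hPC, ← Matrix.mulVec_mulVec]
    congr 1
    funext p
    simp only [Matrix.mulVec, dotProduct, Matrix.map_apply]
    push_cast
    ring
  -- column helpers
  have colmul : ∀ {n : ℕ} (X : Matrix (Fin 2) (Fin 2) ℝ) (Y : Matrix (Fin 2) (Fin n) ℝ)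
      (j : Fin n), (fun a => (X * Y) a j) = X.mulVec (fun c => Y c j) := by
    intro n X Y j
    funext a
    simp [Matrix.mul_apply, Matrix.mulVec, dotProduct]
  set vtx : Fin 2 → Fin N := fun q => ⟨(q : ℕ) + 1, by omega⟩ with hvtx
  set D : Matrix (Fin 2) (Fin 2) ℤ :=
    fun p q => C.mulVec (fun i => W (σ (vtx q)) i - W (σ z0) i) p with hDdef
  have hD : lam • (S * Bmat N r φ) = Bmat N r φ * D.map ((↑) : ℤ → ℝ) := by
    funext a q
    have h1 := congrFun ((hdiff (vtx q)).trans (hPB _)) a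
    have e1 : (fun c => Bmat N r φ c q) = ngonVert N r φ ((vtx q : Fin N) : ℕ) := rfl
    calc (lam • (S * Bmat N r φ)) a q
        = (lam • S.mulVec (fun c => Bmat N r φ c q)) a := by
          simp [Matrix.mul_apply, Matrix.mulVec, dotProduct, Finset.mul_sum]
          left; fin_cases a <;> simp
      _ = ((Bmat N r φ).mulVec (fun p => ((D p q : ℤ) : ℝ))) a := by rw [e1]; exact h1
      _ = (Bmat N r φ * D.map ((↑) : ℤ → ℝ)) a q := by
          simp [Matrix.mul_apply, Matrix.mulVec, dotProduct, Matrix.map_apply]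
  -- A is invertible over ℤ
  have hAdet : IsUnit A.det := by
    rcases (abs_eq (a := A.det) (by norm_num)).mp hA with h | h <;>
      simp [Int.isUnit_iff, h]
  haveI := A.invertibleOfIsUnitDet hAdet
  have hAA' : A * A⁻¹ = 1 := Matrix.mul_nonsing_inv A hAdet
  -- integer coordinates of vertices in the basis B
  set cfin : Fin N → Fin 2 → ℤ := fun m =>
    if h : (m : ℕ) = 0 then 0 else fun p => C p ⟨(m : ℕ) - 1, by have := m.isLt; omega⟩
    with hcfin
  have hvB : ∀ m : Fin N, ngonVert N r φ (m : ℕ) =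
      (Bmat N r φ).mulVec (fun p => ((cfin m p : ℤ) : ℝ)) := by
    intro m
    by_cases h : (m : ℕ) = 0
    · have hz : (fun p => ((cfin m p : ℤ) : ℝ)) = 0 := by
        funext p; simp [hcfin, h]
      rw [hz, Matrix.mulVec_zero, h]
      exact hv0
    · funext a
      have hidx : ((m : ℕ) - 1) + 1 = (m : ℕ) := by omega
      have h2 := congrFun (congrFun hPC a) ⟨(m : ℕ) - 1, by have := m.isLt; omega⟩
      have e2 : ngonVert N r φ (m : ℕ) a =
          ngonMatrix N r φ a ⟨(m : ℕ) - 1, by have := m.isLt; omega⟩ := by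
        simp only [ngonMatrix, hidx]
      rw [e2, h2]
      simp [Matrix.mul_apply, Matrix.mulVec, dotProduct, Matrix.map_apply, hcfin, h]
  -- the matrix G of integer coordinates of the new configuration
  set G : Matrix (Fin 2) (Fin (N - 1)) ℤ :=
    fun p i => cfin (σ.symm ⟨(i : ℕ) + 1, by have := i.isLt; omega⟩) p - cfin (σ.symm z0) p
    with hGdef
  -- t in terms of σ.symm z0
  have ht : t = -(lam • S.mulVec (ngonVert N r φ ((σ.symm z0 : Fin N) : ℕ))) := by
    have h3 := hcfg (σ.symm z0)
    rw [Equiv.apply_symm_apply] at h3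
    have h4 : newConfig N r φ A z0 = 0 := by
      funext a; simp [newConfig, hz0]
    rw [h4] at h3
    linear_combination (norm := module) -h3
  have hPA : ngonMatrix N r φ * A.map ((↑) : ℤ → ℝ) =
      lam • (S * (Bmat N r φ * G.map ((↑) : ℤ → ℝ))) := by
    funext a i
    have hmi : Fin N := ⟨(i : ℕ) + 1, by have := i.isLt; omega⟩
    set m : Fin N := ⟨(i : ℕ) + 1, by have := i.isLt; omega⟩ with hm
    have h5 := hcfg (σ.symm m)
    rw [Equiv.apply_symm_apply] at h5
    have h6 : newConfig N r φ A m a = (ngonMatrix N r φ * A.map ((↑) : ℤ → ℝ)) a i := by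
      have : ((m : ℕ) - 1) = (i : ℕ) := by simp [hm]
      simp only [newConfig, hm]
      rw [dif_neg (by simp)]
      congr 1 <;> omega
    have h7 : (ngonMatrix N r φ * A.map ((↑) : ℤ → ℝ)) a i =
        (lam • S.mulVec (ngonVert N r φ ((σ.symm m : Fin N) : ℕ)) + t) a := by
      rw [← h6, h5]
    rw [h7, ht]
    -- now both sides in terms of S.mulVec of B.mulVec of integer vectors
    rw [hvB (σ.symm m), hvB (σ.symm z0)]
    have hGcol : (fun p => ((G p i : ℤ) : ℝ)) =
        (fun p => ((cfin (σ.symm m) p : ℤ) : ℝ)) - (fun p => ((cfin (σ.symm z0) p : ℤ) : ℝ)) := by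
      funext p; simp [hGdef, hm, Pi.sub_apply]
    have h8 : (lam • (S * (Bmat N r φ * G.map ((↑) : ℤ → ℝ)))) a i
        = (lam • S.mulVec ((Bmat N r φ).mulVec (fun p => ((G p i : ℤ) : ℝ)))) a := by
      simp only [Matrix.smul_apply, Matrix.mul_apply, Matrix.mulVec, dotProduct,
        Matrix.map_apply, Pi.smul_apply, smul_eq_mul, Fin.sum_univ_two]
    rw [h8, hGcol, Matrix.mulVec_sub, Matrix.mulVec_sub]
    simp only [Pi.add_apply, Pi.neg_apply, Pi.smul_apply, Pi.sub_apply, smul_eq_mul,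
      Matrix.mulVec_mulVec]
    ring
  -- P = lam • (S * (B * (G * A⁻¹).map))
  have hP2 : ngonMatrix N r φ =
      lam • (S * (Bmat N r φ * (G * A⁻¹).map ((↑) : ℤ → ℝ))) := by
    calc ngonMatrix N r φ
        = (ngonMatrix N r φ * A.map ((↑) : ℤ → ℝ)) * (A⁻¹).map ((↑) : ℤ → ℝ) := by
          rw [Matrix.mul_assoc, ← intMap_mul, hAA', Matrix.map_one _ (by simp) (by simp),
            Matrix.mul_one]
      _ = (lam • (S * (Bmat N r φ * G.map ((↑) : ℤ → ℝ)))) * (A⁻¹).map ((↑) : ℤ → ℝ) := by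
          rw [hPA]
      _ = lam • (S * (Bmat N r φ * (G * A⁻¹).map ((↑) : ℤ → ℝ))) := by
          rw [Matrix.smul_mul, Matrix.mul_assoc, Matrix.mul_assoc, ← intMap_mul]
  set E : Matrix (Fin 2) (Fin 2) ℤ :=
    fun p q => (G * A⁻¹) p ⟨(q : ℕ), by omega⟩ with hEdef
  have hBE : Bmat N r φ = lam • (S * (Bmat N r φ * E.map ((↑) : ℤ → ℝ))) := by
    funext a q
    have h9 := congrFun (congrFun hP2 a) ⟨(q : ℕ), by omega⟩
    have e3 : Bmat N r φ a q = ngonMatrix N r φ a ⟨(q : ℕ), by omega⟩ := rfl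
    rw [e3, h9]
    simp [Matrix.mul_apply, Matrix.mulVec, dotProduct, Matrix.map_apply, hEdef]
    left; simp [Matrix.map, Matrix.of_apply]
  -- assemble : B = B * (D * E).map
  have hfin : Bmat N r φ = Bmat N r φ * (D * E).map ((↑) : ℤ → ℝ) := by
    calc Bmat N r φ = lam • (S * (Bmat N r φ * E.map ((↑) : ℤ → ℝ))) := hBE
      _ = (lam • (S * Bmat N r φ)) * E.map ((↑) : ℤ → ℝ) := by
          rw [Matrix.smul_mul, Matrix.mul_assoc]
      _ = (Bmat N r φ * D.map ((↑) : ℤ → ℝ)) * E.map ((↑) : ℤ → ℝ) := by rw [hD]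
      _ = Bmat N r φ * (D * E).map ((↑) : ℤ → ℝ) := by
          rw [Matrix.mul_assoc, ← intMap_mul]
  haveI : Invertible (Bmat N r φ) :=
    (Bmat N r φ).invertibleOfIsUnitDet (isUnit_iff_ne_zero.2 hB)
  have hDE1 : (D * E).map ((↑) : ℤ → ℝ) = 1 := by
    have := congrArg (fun M => ⅟(Bmat N r φ) * M) hfin
    simpa [← Matrix.mul_assoc] using this.symm
  have hDE : D * E = 1 := by
    ext p q
    have h10 := congrFun (congrFun hDE1 p) q
    by_cases hpq : p = q
    · subst hpq
      simp only [Matrix.map_apply, Matrix.one_apply_eq] at h10 ⊢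
      exact_mod_cast h10
    · simp only [Matrix.map_apply, Matrix.one_apply_ne hpq] at h10 ⊢
      exact_mod_cast h10
  -- determinant computations
  have hdetD : D.det = 1 ∨ D.det = -1 := by
    have : IsUnit D.det := IsUnit.of_mul_eq_one E.det
      (by rw [← Matrix.det_mul, hDE, Matrix.det_one])
    exact Int.isUnit_iff.mp this
  have hdetS : S.det * S.det = 1 := by
    have := congrArg Matrix.det hS
    rwa [Matrix.det_mul, Matrix.det_transpose, Matrix.det_one] at this
  have hdeteq : lam ^ 2 * S.det = (D.det : ℝ) := by
    have h11 := congrArg Matrix.det hD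
    rw [Matrix.det_smul, Matrix.det_mul, Matrix.det_mul, Fintype.card_fin,
      intMap_det] at h11
    have h12 : (lam ^ 2 * S.det) * (Bmat N r φ).det = ((D.det : ℝ)) * (Bmat N r φ).det := by
      push_cast at h11 ⊢
      linarith [h11]
    exact mul_right_cancel₀ hB h12
  have hD2 : ((D.det : ℝ)) ^ 2 = 1 := by
    rcases hdetD with h | h <;> rw [h] <;> norm_num
  have hlam4 : lam ^ 4 = 1 := by
    have : (lam ^ 2 * S.det) ^ 2 = 1 := by rw [hdeteq]; exact hD2
    nlinarith [hdetS, this]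
  have : 1 < lam ^ 4 := one_lt_pow₀ hlam (by norm_num)
  linarith



lemma hPC3 (r φ : ℝ) :
    ngonMatrix 3 r φ = Bmat 3 r φ *
      (!![1,0;0,1] : Matrix (Fin 2) (Fin (3-1)) ℤ).map ((↑) : ℤ → ℝ) := by
  funext a i
  fin_cases a <;> fin_cases i <;>
    simp [ngonMatrix, Bmat, ngonVert, Matrix.mul_apply, Fin.sum_univ_two, Matrix.map_apply] <;>
    norm_num

lemma hPC4 (r φ : ℝ) :
    ngonMatrix 4 r φ = Bmat 4 r φ *
      (!![1,0,-1;0,1,1] : Matrix (Fin 2) (Fin (4-1)) ℤ).map ((↑) : ℤ → ℝ) := by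
  funext a i
  fin_cases a <;> fin_cases i <;>
    simp [ngonMatrix, Bmat, ngonVert, Matrix.mul_apply, Fin.sum_univ_two, Matrix.map_apply] <;>
    ring_nf <;>
    simp [cos_add, sin_add, cosv1, sinv1, cosv2, sinv2, cosv3, sinv3, cosv4, sinv4, cosv5, sinv5,
      cosv6, sinv6] <;>
    ring

lemma hPC6 (r φ : ℝ) :
    ngonMatrix 6 r φ = Bmat 6 r φ *
      (!![1,0,-2,-3,-2;0,1,2,2,1] : Matrix (Fin 2) (Fin (6-1)) ℤ).map ((↑) : ℤ → ℝ) := by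
  funext a i
  fin_cases a <;> fin_cases i <;>
    simp [ngonMatrix, Bmat, ngonVert, Matrix.mul_apply, Fin.sum_univ_two, Matrix.map_apply] <;>
    ring_nf <;>
    simp [cos_add, sin_add, cosv1, sinv1, cosv2, sinv2, cosv3, sinv3, cosv4, sinv4, cosv5, sinv5,
      cosv6, sinv6] <;>
    ring

lemma hB3 (r φ : ℝ) (hr : 0 < r) : (Bmat 3 r φ).det ≠ 0 := by
  have h : (Bmat 3 r φ).det = 3 * √3 / 2 * r ^ 2 := by
    simp [Matrix.det_fin_two, Bmat, ngonVert]
    ring_nf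
    simp [cos_add, sin_add, cosv4, sinv4, cosv5, sinv5]
    linear_combination (3 * √3 / 2 * r ^ 2) * (sin_sq_add_cos_sq φ)
  rw [h]
  positivity

lemma hB4 (r φ : ℝ) (hr : 0 < r) : (Bmat 4 r φ).det ≠ 0 := by
  have h : (Bmat 4 r φ).det = 2 * r ^ 2 := by
    simp [Matrix.det_fin_two, Bmat, ngonVert]
    ring_nf
    simp [cos_add, sin_add, cosv1, sinv1]
    linear_combination (2 * r ^ 2) * (sin_sq_add_cos_sq φ)
  rw [h]
  positivity

lemma hB6 (r φ : ℝ) (hr : 0 < r) : (Bmat 6 r φ).det ≠ 0 := by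
  have h : (Bmat 6 r φ).det = √3 / 2 * r ^ 2 := by
    simp [Matrix.det_fin_two, Bmat, ngonVert]
    ring_nf
    simp [cos_add, sin_add, cosv3, sinv3, cosv4, sinv4]
    linear_combination (√3 / 2 * r ^ 2) * (sin_sq_add_cos_sq φ)
  rw [h]
  positivity

/-- For `N ∈ {3, 4, 6}` there is no integer matrix `A` with `|det A| = 1` such that the
configuration `P A` (together with the origin) is the vertex set of a regular `N`-gon of
strictly larger side length, i.e. the image of the original configuration under a similarity
(orthogonal map scaled by `λ > 1`, followed by a translation, up to relabelling). -/
theorem no_enlarging_matrix_346 (N : ℕ) (hN : N = 3 ∨ N = 4 ∨ N = 6) (r φ : ℝ)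
    (hr : 0 < r) :
    ¬ ∃ A : Matrix (Fin (N - 1)) (Fin (N - 1)) ℤ,
        |A.det| = 1 ∧
        ∃ (lam : ℝ) (S : Matrix (Fin 2) (Fin 2) ℝ) (t : Fin 2 → ℝ) (σ : Equiv.Perm (Fin N)),
          1 < lam ∧ S.transpose * S = 1 ∧
          ∀ k : Fin N,
            newConfig N r φ A (σ k) = lam • S.mulVec (ngonVert N r φ k) + t := by
  rcases hN with rfl | rfl | rfl
  · exact aux 3 (by norm_num) r φ _ (hPC3 r φ) (hB3 r φ hr)
  · exact aux 4 (by norm_num) r φ _ (hPC4 r φ) (hB4 r φ hr)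
  · exact aux 6 (by norm_num) r φ _ (hPC6 r φ) (hB6 r φ hr)

end
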